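/- arXiv:2009.12454 — 3 statements merged into one kernel-verified Lean document; each statement's English description precedes it below -/
import Mathlib

section
/- Multiplication by 1_S is a bijection from T^{β_H}·e_H onto S^{α_H}, with inverse ψ_H. Precisely: (a) for every x ∈ T^{β_H}, the element x·1_S lies in S^{α_H} and ψ_H(x·1_S) = x·e_H; (b) for every s ∈ S^{α_H}, ψ_H(s) lies in T^{β_H}·e_H and ψ_H(s)·1_S = s. In particular {x·1_S : x ∈ T^{β_H}} = S^{α_H}. (Proposition 2.1(vi).) -/
/-!
The `f i := β_{h_i}(1_S)` are central idempotents. Their disjointification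
`e_i = (1 - f_0) ⋯ (1 - f_{i-1}) f_i` consists of orthogonal idempotents with
`∑ e_i = 1 - ∏ (1 - f_j)`, which is `e_H`. For `s ∈ S^{α_H}` the pieces `β_{h_i}(s) f_i` agree on
overlaps, `β_{h_i}(s) f_i f_j = β_{h_j}(s) f_i f_j`, and `ψ_H(s) = ∑ β_{h_i}(s) e_i` glues them:
`ψ_H(s) f_j = β_{h_j}(s) f_j` and `ψ_H(s) ∏ (1 - f_j) = 0`, conditions which determine an element
uniquely. As `β_{h_k}` permutes the `f_j` (left multiplication by `h_k` permutes the finite set `H`),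
`β_{h_k}(ψ_H(s))` satisfies the same conditions, so it equals `ψ_H(s)`; at `j = 0` they give
`ψ_H(s) 1_S = s`.
-/

open Finset

section DisjointedIdempotents

variable {R : Type*} [Ring R] {f : ℕ → R}

def prodOneSub (f : ℕ → R) (n : ℕ) : R := ((List.range n).map fun j => 1 - f j).prod

def disjointedIdem (f : ℕ → R) (i : ℕ) : R := prodOneSub f i * f i

theorem prodOneSub_succ (n : ℕ) : prodOneSub f (n + 1) = prodOneSub f n * (1 - f n) :=
  List.prod_range_succ _ n

theorem sum_disjointedIdem (n : ℕ) :
    ∑ i ∈ range n, disjointedIdem f i = 1 - prodOneSub f n := by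
  induction n with
  | zero => simp [prodOneSub]
  | succ n ih => rw [sum_range_succ, ih, prodOneSub_succ, disjointedIdem]; noncomm_ring

theorem disjointedIdem_mul_self (hidem : ∀ i, IsIdempotentElem (f i)) (i : ℕ) :
    disjointedIdem f i * f i = disjointedIdem f i := by
  rw [disjointedIdem, mul_assoc, hidem i]

variable (hf : ∀ i, f i ∈ Subring.center R)
include hf

theorem prodOneSub_mem_center (n : ℕ) : prodOneSub f n ∈ Subring.center R :=
  Subring.list_prod_mem _ fun _ hx => by
    obtain ⟨j, -, rfl⟩ := List.mem_map.mp hx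
    exact sub_mem (one_mem _) (hf j)

theorem prodOneSub_mul_of_lt (hidem : ∀ i, IsIdempotentElem (f i)) {n j : ℕ} (hj : j < n) :
    prodOneSub f n * f j = 0 := by
  induction n with
  | zero => exact absurd hj (Nat.not_lt_zero j)
  | succ n ih =>
    rw [prodOneSub_succ, mul_assoc]
    rcases Nat.lt_succ_iff_lt_or_eq.mp hj with hj | rfl
    · rw [Subring.mem_center_iff.mp (hf j) (1 - f n), ← mul_assoc, ih hj, zero_mul]
    · rw [sub_mul, one_mul, hidem j, sub_self, mul_zero]

theorem sum_mul_prodOneSub_eq_zero (hidem : ∀ i, IsIdempotentElem (f i)) {ι : Type*}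
    (s : Finset ι) (w : ι → R) {n : ℕ} (hw : ∀ i ∈ s, ∃ j < n, w i * f j = w i) :
    (∑ i ∈ s, w i) * prodOneSub f n = 0 := by
  rw [sum_mul]
  refine sum_eq_zero fun i hi => ?_
  obtain ⟨j, hj, hwj⟩ := hw i hi
  rw [← hwj, mul_assoc, Subring.mem_center_iff.mp (prodOneSub_mem_center hf n) (f j),
    prodOneSub_mul_of_lt hf hidem hj, mul_zero]

theorem eq_sum_mul_disjointedIdem {n : ℕ} {y : R} {z : ℕ → R} (hy0 : y * prodOneSub f n = 0)
    (hy : ∀ j < n, y * f j = z j * f j) :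
    y = ∑ j ∈ range n, z j * disjointedIdem f j := by
  calc y = y * ∑ j ∈ range n, disjointedIdem f j := by
        rw [sum_disjointedIdem, mul_sub, mul_one, hy0, sub_zero]
    _ = ∑ j ∈ range n, z j * disjointedIdem f j := by
        rw [mul_sum]
        refine sum_congr rfl fun j hj => ?_
        rw [disjointedIdem, Subring.mem_center_iff.mp (hf j), ← mul_assoc, hy j (mem_range.mp hj),
          mul_assoc, ← Subring.mem_center_iff.mp (hf j)]

theorem sum_mul_disjointedIdem_mul_prodOneSub (hidem : ∀ i, IsIdempotentElem (f i)) (n : ℕ)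
    (z : ℕ → R) : (∑ j ∈ range n, z j * disjointedIdem f j) * prodOneSub f n = 0 :=
  sum_mul_prodOneSub_eq_zero hf hidem _ _ fun j hj =>
    ⟨j, mem_range.mp hj, by rw [mul_assoc, disjointedIdem_mul_self hidem]⟩

theorem sum_mul_disjointedIdem_mul_of_compat (hidem : ∀ i, IsIdempotentElem (f i)) {n : ℕ}
    {z : ℕ → R} (hz : ∀ i < n, ∀ j < n, z i * (f i * f j) = z j * (f i * f j)) {j : ℕ}
    (hj : j < n) : (∑ i ∈ range n, z i * disjointedIdem f i) * f j = z j * f j := by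
  have hP := fun i => Subring.mem_center_iff.mp (prodOneSub_mem_center hf i)
  have hterm : ∀ i ∈ range n, z i * disjointedIdem f i * f j = z j * f j * disjointedIdem f i := by
    intro i hi
    calc z i * disjointedIdem f i * f j = z i * (f i * f j) * prodOneSub f i := by
          rw [disjointedIdem, ← hP i (f i)]
          simp only [mul_assoc]
          rw [hP i (f j)]
      _ = z j * f j * disjointedIdem f i := by
          rw [hz i (mem_range.mp hi) j hj, disjointedIdem, ← hP i (f i),
            Subring.mem_center_iff.mp (hf j) (f i)]
          simp only [mul_assoc]
  rw [sum_mul, sum_congr rfl hterm, ← mul_sum, sum_disjointedIdem, mul_sub, mul_one, mul_assoc,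
    hP n (f j), prodOneSub_mul_of_lt hf hidem hj, mul_zero, sub_zero]

end DisjointedIdempotents

theorem exists_mul_eq_of_forall_mul_mem {G : Type*} [Group G] {h : ℕ → G} {m : ℕ}
    (hmulc : ∀ i < m, ∀ j < m, ∃ k < m, h i * h j = h k) {k l : ℕ} (hk : k < m) (hl : l < m) :
    ∃ j < m, h k * h j = h l := by
  classical
  set A := (range m).image h
  have hmaps : Set.MapsTo (h k * ·) A A := by
    intro x hx
    obtain ⟨j, hj, rfl⟩ := mem_image.mp hx
    obtain ⟨i, hi, hkj⟩ := hmulc k hk j (mem_range.mp hj)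
    exact mem_image.mpr ⟨i, mem_range.mpr hi, hkj.symm⟩
  obtain ⟨_, hx, hkx⟩ := surjOn_of_injOn_of_card_le _ hmaps
    (fun _ _ _ _ => mul_left_cancel) le_rfl (mem_image_of_mem h (mem_range.mpr hl))
  obtain ⟨j, hj, rfl⟩ := mem_image.mp hx
  exact ⟨j, mem_range.mp hj, hkx⟩

section PartialInvariants

variable {T : Type*} [Ring T] {G : Type*} [Group G] (β : G →* RingAut T) (oneS : T) (h : ℕ → G)

def orbitIdem (i : ℕ) : T := β (h i) oneS

/-- The paper's `ψ_H`; `disjointedIdem (orbitIdem β oneS h) i` is its `e_i`. -/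
def psiH (m : ℕ) (t : T) : T := ∑ i ∈ range m, β (h i) t * disjointedIdem (orbitIdem β oneS h) i

variable {β oneS h}

theorem apply_apply_of_mul_eq {a b c : G} (habc : a * b = c) (t : T) : β a (β b t) = β c t := by
  rw [← habc, map_mul, RingAut.mul_apply]

theorem apply_orbitIdem_of_mul_eq {k i l : ℕ} (hkil : h k * h i = h l) :
    β (h k) (orbitIdem β oneS h i) = orbitIdem β oneS h l :=
  apply_apply_of_mul_eq hkil oneS

theorem orbitIdem_mem_center (hcenter : oneS ∈ Subring.center T) (i : ℕ) :
    orbitIdem β oneS h i ∈ Subring.center T :=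
  MulEquivClass.apply_mem_center (β (h i)) hcenter

theorem orbitIdem_isIdempotentElem (hidem : IsIdempotentElem oneS) (i : ℕ) :
    IsIdempotentElem (orbitIdem β oneS h i) :=
  hidem.map (β (h i))

theorem psiH_mul_prodOneSub (hcenter : oneS ∈ Subring.center T) (hidem : IsIdempotentElem oneS)
    (m : ℕ) (t : T) : psiH β oneS h m t * prodOneSub (orbitIdem β oneS h) m = 0 :=
  sum_mul_disjointedIdem_mul_prodOneSub (orbitIdem_mem_center hcenter)
    (orbitIdem_isIdempotentElem hidem) m _

theorem psiH_one (hcenter : oneS ∈ Subring.center T) (hidem : IsIdempotentElem oneS) (m : ℕ) :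
    psiH β oneS h m oneS = 1 - prodOneSub (orbitIdem β oneS h) m := by
  rw [psiH, ← sum_disjointedIdem]
  refine sum_congr rfl fun i _ => ?_
  change orbitIdem β oneS h i * _ = _
  rw [← Subring.mem_center_iff.mp (orbitIdem_mem_center hcenter i),
    disjointedIdem_mul_self (orbitIdem_isIdempotentElem hidem)]

theorem psiH_mul_of_invariant {m : ℕ} {x : T} (hx : ∀ i < m, β (h i) x = x) (t : T) :
    psiH β oneS h m (x * t) = x * psiH β oneS h m t := by
  rw [psiH, psiH, mul_sum]
  exact sum_congr rfl fun i hi => by rw [map_mul, hx i (mem_range.mp hi), mul_assoc]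

variable {m : ℕ} {s : T} (hs : s * oneS = s)
  (hsα : ∀ i < m, β (h i) s * oneS = s * (β (h i) oneS * oneS))
include hs hsα

theorem apply_mul_orbitIdem_mul_eq (hmulc : ∀ i < m, ∀ j < m, ∃ k < m, h i * h j = h k)
    {i j : ℕ} (hi : i < m) (hj : j < m) :
    β (h i) s * (orbitIdem β oneS h i * orbitIdem β oneS h j) =
      β (h j) s * (orbitIdem β oneS h i * orbitIdem β oneS h j) := by
  obtain ⟨l, hl, hjli⟩ := exists_mul_eq_of_forall_mul_mem hmulc hj hi
  have hjl := congrArg (β (h j)) (hsα l hl)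
  simp only [map_mul, apply_apply_of_mul_eq hjli] at hjl
  rw [← mul_assoc, orbitIdem, ← map_mul, hs]
  exact hjl

variable (hcenter : oneS ∈ Subring.center T) (hidem : IsIdempotentElem oneS)
include hcenter hidem

theorem psiH_mul_orbitIdem (hmulc : ∀ i < m, ∀ j < m, ∃ k < m, h i * h j = h k)
    {j : ℕ} (hj : j < m) :
    psiH β oneS h m s * orbitIdem β oneS h j = β (h j) s * orbitIdem β oneS h j :=
  sum_mul_disjointedIdem_mul_of_compat (orbitIdem_mem_center hcenter)
    (orbitIdem_isIdempotentElem hidem)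
    (fun _ hi _ hj => apply_mul_orbitIdem_mul_eq hs hsα hmulc hi hj) hj

theorem psiH_mul_oneS (hmulc : ∀ i < m, ∀ j < m, ∃ k < m, h i * h j = h k) (hm : 0 < m)
    (h1 : h 0 = 1) : psiH β oneS h m s * oneS = s := by
  have hβ0 : ∀ t, β (h 0) t = t := fun t => by rw [h1, map_one, RingAut.one_apply]
  have h0 := psiH_mul_orbitIdem hs hsα hcenter hidem hmulc hm
  rwa [orbitIdem, hβ0, hβ0, hs] at h0

theorem apply_psiH (hmulc : ∀ i < m, ∀ j < m, ∃ k < m, h i * h j = h k) {k : ℕ} (hk : k < m) :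
    β (h k) (psiH β oneS h m s) = psiH β oneS h m s := by
  refine eq_sum_mul_disjointedIdem (orbitIdem_mem_center hcenter) ?_ fun l hl => ?_
  · rw [psiH, map_sum]
    refine sum_mul_prodOneSub_eq_zero (orbitIdem_mem_center hcenter)
      (orbitIdem_isIdempotentElem hidem) _ _ fun i hi => ?_
    obtain ⟨l, hl, hkil⟩ := hmulc k hk i (mem_range.mp hi)
    refine ⟨l, hl, ?_⟩
    rw [← apply_orbitIdem_of_mul_eq hkil, ← map_mul, mul_assoc,
      disjointedIdem_mul_self (orbitIdem_isIdempotentElem hidem)]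
  · obtain ⟨j, hj, hkjl⟩ := exists_mul_eq_of_forall_mul_mem hmulc hk hl
    rw [← apply_orbitIdem_of_mul_eq hkjl, ← map_mul,
      psiH_mul_orbitIdem hs hsα hcenter hidem hmulc hj, map_mul, apply_apply_of_mul_eq hkjl]

end PartialInvariants

theorem stmt_3_general {T : Type*} [Ring T] {G : Type*} [Group G]
    (β : G →* RingAut T) (oneS : T)
    (hcentral : ∀ t : T, oneS * t = t * oneS)
    (hidem : oneS * oneS = oneS)
    (m : ℕ) (hm : 0 < m) (h : ℕ → G) (h1 : h 0 = 1)
    (hmulc : ∀ i < m, ∀ j < m, ∃ k < m, h i * h j = h k)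
    (e : ℕ → T)
    (he : ∀ i, e i = (((List.range i).map fun j => 1 - β (h j) oneS).prod) * β (h i) oneS)
    (ψ : T → T) (hψ : ∀ t, ψ t = ∑ i ∈ Finset.range m, β (h i) t * e i)
    (eH : T) (heH : eH = ψ oneS) :
    (∀ x : T, (∀ i < m, β (h i) x = x) →
      (x * oneS) * oneS = x * oneS ∧
      (∀ i < m, β (h i) (x * oneS) * oneS = (x * oneS) * (β (h i) oneS * oneS)) ∧
      ψ (x * oneS) = x * eH) ∧
    (∀ s : T, s * oneS = s →
      (∀ i < m, β (h i) s * oneS = s * (β (h i) oneS * oneS)) →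
      (∃ x : T, (∀ i < m, β (h i) x = x) ∧ ψ s = x * eH) ∧ ψ s * oneS = s) ∧
    ({t : T | ∃ x : T, (∀ i < m, β (h i) x = x) ∧ t = x * oneS} =
      {s : T | s * oneS = s ∧ ∀ i < m, β (h i) s * oneS = s * (β (h i) oneS * oneS)}) := by
  obtain rfl : ψ = psiH β oneS h m :=
    funext fun t => (hψ t).trans (sum_congr rfl fun i _ => by rw [he]; rfl)
  subst heH
  have hcenter : oneS ∈ Subring.center T := Subring.mem_center_iff.mpr fun t => (hcentral t).symm
  have partA : ∀ x : T, (∀ i < m, β (h i) x = x) →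
      x * oneS * oneS = x * oneS ∧
      (∀ i < m, β (h i) (x * oneS) * oneS = x * oneS * (β (h i) oneS * oneS)) := fun x hx =>
    ⟨by rw [mul_assoc, hidem], fun i hi => by
      rw [map_mul, hx i hi, mul_assoc, mul_assoc, hcentral, mul_assoc, hidem]⟩
  refine ⟨fun x hx => ⟨(partA x hx).1, (partA x hx).2, psiH_mul_of_invariant hx oneS⟩,
    fun s hs hsα => ⟨⟨_, fun k hk => apply_psiH hs hsα hcenter hidem hmulc hk, ?_⟩,
      psiH_mul_oneS hs hsα hcenter hidem hmulc hm h1⟩, Set.ext fun t => ⟨?_, ?_⟩⟩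
  · rw [psiH_one hcenter hidem, mul_sub, mul_one, psiH_mul_prodOneSub hcenter hidem, sub_zero]
  · rintro ⟨x, hx, rfl⟩
    exact partA x hx
  · rintro ⟨ht, htα⟩
    exact ⟨_, fun k hk => apply_psiH ht htα hcenter hidem hmulc hk,
      (psiH_mul_oneS ht htα hcenter hidem hmulc hm h1).symm⟩

/-- Proposition 2.1(vi): multiplication by 1_S is a bijection from T^{β_H}·e_H onto
S^{α_H}, with inverse ψ_H; in particular T^{β_H}·1_S = S^{α_H}. -/
theorem stmt_3 {T : Type*} [Ring T] {G : Type*} [Group G]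
    (β : G →* RingAut T) (oneS : T)
    (hcentral : ∀ t : T, oneS * t = t * oneS)
    (hidem : oneS * oneS = oneS)
    (m : ℕ) (hm : 0 < m) (h : ℕ → G) (h1 : h 0 = 1)
    (hinj : ∀ i < m, ∀ j < m, h i = h j → i = j)
    (hmulc : ∀ i < m, ∀ j < m, ∃ k < m, h i * h j = h k)
    (e : ℕ → T)
    (he : ∀ i, e i = (((List.range i).map fun j => 1 - β (h j) oneS).prod) * β (h i) oneS)
    (ψ : T → T) (hψ : ∀ t, ψ t = ∑ i ∈ Finset.range m, β (h i) t * e i)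
    (eH : T) (heH : eH = ψ oneS) :
    (∀ x : T, (∀ i < m, β (h i) x = x) →
      (x * oneS) * oneS = x * oneS ∧
      (∀ i < m, β (h i) (x * oneS) * oneS = (x * oneS) * (β (h i) oneS * oneS)) ∧
      ψ (x * oneS) = x * eH) ∧
    (∀ s : T, s * oneS = s →
      (∀ i < m, β (h i) s * oneS = s * (β (h i) oneS * oneS)) →
      (∃ x : T, (∀ i < m, β (h i) x = x) ∧ ψ s = x * eH) ∧ ψ s * oneS = s) ∧
    ({t : T | ∃ x : T, (∀ i < m, β (h i) x = x) ∧ t = x * oneS} =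
      {s : T | s * oneS = s ∧ ∀ i < m, β (h i) s * oneS = s * (β (h i) oneS * oneS)}) :=
  stmt_3_general β oneS hcentral hidem m hm h h1 hmulc e he ψ hψ eH heH
end

section
/- The invariants of S^{α_H} under the induced partial action α̃ of G/H equal S^{α_G}; explicitly, {s ∈ T : s = s·1_S, β_h(s)·1_S = s·1_h for all h ∈ H, and β_g(ψ_H(s))·1_S = s·β_g(e_H)·1_S for all g ∈ G} = {s ∈ T : s = s·1_S and β_g(s)·1_S = s·1_g for all g ∈ G}. (Theorem 3.5(ii).) -/
/-!
Only the first idempotent `e 0 = 1_S` survives multiplication by `1_S`, so `ψ_H(s) 1_S = s` for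
every `s ∈ S`. Applying `β_g` to this turns the `G/H`-invariance condition into the
`G`-invariance condition; conversely, `G`-invariance of `s` applied to each `g h_i` gives the
`G/H`-invariance condition termwise in the sum defining `ψ_H`.
-/

open Finset

theorem map_mul_eq_of_map_mul_eq {M F : Type*} [CommMonoid M] [FunLike F M M]
    [MulHomClass F M M] (σ : F) {p s a b : M} (ha : a * p = s) (hb : b * p = p)
    (hab : σ a * p = s * (σ b * p)) : σ s * p = s * (σ p * p) := by
  have hσs : σ s = σ a * σ p := by rw [← ha, map_mul]
  have hσp : σ p = σ b * σ p := by rw [← map_mul, hb]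
  calc σ s * p = σ a * p * σ p := by rw [hσs, mul_right_comm]
    _ = s * (σ b * σ p * p) := by rw [hab]; ac_rfl
    _ = s * (σ p * p) := by rw [← hσp]

section

variable {T G : Type*} [CommRing T] [Group G]

/-- The idempotent `e_{i+1}` of the paper, with `h 0 = 1` playing the role of `h_1`. -/
def orthIdem (β : G →* RingAut T) (p : T) (h : ℕ → G) (i : ℕ) : T :=
  (∏ j ∈ range i, (1 - β (h j) p)) * β (h i) p

/-- The map `ψ_H` of the paper, for `H = {h 0, …, h (m - 1)}`. -/
def psi (β : G →* RingAut T) (p : T) (h : ℕ → G) (m : ℕ) (t : T) : T :=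
  ∑ i ∈ range m, β (h i) t * orthIdem β p h i

section

variable {β : G →* RingAut T} {p : T} {h : ℕ → G}

theorem orthIdem_zero (h1 : h 0 = 1) : orthIdem β p h 0 = p := by
  rw [orthIdem, prod_range_zero, one_mul, h1, map_one, RingAut.one_apply]

theorem orthIdem_mul_of_pos (hp : p * p = p) (h1 : h 0 = 1) {i : ℕ} (hi : 0 < i) :
    orthIdem β p h i * p = 0 := by
  obtain ⟨k, rfl⟩ := Nat.exists_eq_succ_of_ne_zero hi.ne'
  have hcompl : (1 - p) * p = 0 := by rw [sub_mul, one_mul, hp, sub_self]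
  rw [orthIdem, prod_range_succ', h1, map_one, RingAut.one_apply]
  linear_combination (∏ j ∈ range k, (1 - β (h (j + 1)) p)) * β (h (k + 1)) p * hcompl

theorem psi_mul_of_mul_eq (hp : p * p = p) (h1 : h 0 = 1) {m : ℕ} (hm : 0 < m) {s : T}
    (hs : s * p = s) : psi β p h m s * p = s := by
  rw [psi, sum_mul, sum_eq_single_of_mem 0 (mem_range.mpr hm)]
  · rw [orthIdem_zero h1, h1, map_one, RingAut.one_apply, hs, hs]
  · intro i _ hi
    rw [mul_assoc, orthIdem_mul_of_pos hp h1 (Nat.pos_of_ne_zero hi), mul_zero]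

end

theorem map_sum_mul_eq_of_forall_map_mul_eq (β : G →* RingAut T) (p : T) (h : ℕ → G)
    (e : ℕ → T) (I : Finset ℕ) {s : T} (hs : ∀ g, β g s * p = s * (β g p * p)) (g : G) :
    β g (∑ i ∈ I, β (h i) s * e i) * p = s * (β g (∑ i ∈ I, β (h i) p * e i) * p) := by
  rw [map_sum, map_sum, sum_mul, sum_mul, mul_sum]
  refine sum_congr rfl fun i _ => ?_
  have hgi := hs (g * h i)
  simp only [map_mul β, RingAut.mul_apply] at hgi
  rw [map_mul, map_mul]
  linear_combination β g (e i) * hgi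

end

theorem stmt_8_general {T : Type*} [CommRing T] {G : Type*} [Group G]
    (β : G →* RingAut T) (oneS : T) (hidem : oneS * oneS = oneS)
    (m : ℕ) (hm : 0 < m) (h : ℕ → G) (h1 : h 0 = 1)
    (e : ℕ → T)
    (he : ∀ i, e i = (∏ j ∈ Finset.range i, (1 - β (h j) oneS)) * β (h i) oneS)
    (ψ : T → T) (hψ : ∀ t, ψ t = ∑ i ∈ Finset.range m, β (h i) t * e i)
    (eH : T) (heH : eH = ψ oneS) :
    {s : T | s * oneS = s ∧
        (∀ i < m, β (h i) s * oneS = s * (β (h i) oneS * oneS)) ∧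
        ∀ g : G, β g (ψ s) * oneS = s * (β g eH * oneS)} =
    {s : T | s * oneS = s ∧ ∀ g : G, β g s * oneS = s * (β g oneS * oneS)} := by
  obtain rfl : e = orthIdem β oneS h := funext he
  obtain rfl : ψ = psi β oneS h m := funext hψ
  subst heH
  ext s
  constructor
  · rintro ⟨hs, -, hG⟩
    exact ⟨hs, fun g => map_mul_eq_of_map_mul_eq (β g) (psi_mul_of_mul_eq hidem h1 hm hs)
      (psi_mul_of_mul_eq hidem h1 hm hidem) (hG g)⟩
  · rintro ⟨hs, hG⟩
    exact ⟨hs, fun i _ => hG (h i), map_sum_mul_eq_of_forall_map_mul_eq β oneS h _ _ hG⟩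

/-- Theorem 3.5(ii): the invariants of S^{α_H} under the induced partial action of G/H
equal S^{α_G}. -/
theorem stmt_8 {T : Type*} [CommRing T] {G : Type*} [Group G] [Fintype G]
    (β : G →* RingAut T) (oneS : T) (hidem : oneS * oneS = oneS)
    (hglob : ∏ g : G, (1 - β g oneS) = 0)
    (m : ℕ) (hm : 0 < m) (h : ℕ → G) (h1 : h 0 = 1)
    (hinj : ∀ i < m, ∀ j < m, h i = h j → i = j)
    (hmulc : ∀ i < m, ∀ j < m, ∃ k < m, h i * h j = h k)
    (hnormal : ∀ g : G, ∀ i < m, ∃ j < m, g * h i * g⁻¹ = h j)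
    (e : ℕ → T)
    (he : ∀ i, e i = (∏ j ∈ Finset.range i, (1 - β (h j) oneS)) * β (h i) oneS)
    (ψ : T → T) (hψ : ∀ t, ψ t = ∑ i ∈ Finset.range m, β (h i) t * e i)
    (eH : T) (heH : eH = ψ oneS) :
    {s : T | s * oneS = s ∧
        (∀ i < m, β (h i) s * oneS = s * (β (h i) oneS * oneS)) ∧
        ∀ g : G, β g (ψ s) * oneS = s * (β g eH * oneS)} =
    {s : T | s * oneS = s ∧ ∀ g : G, β g s * oneS = s * (β g oneS * oneS)} :=
  stmt_8_general β oneS hidem m hm h h1 e he ψ hψ eH heH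
end

section
/- Assume in addition that S is a partial α-Galois extension of S^{α_G}, i.e. there exist n and elements x_i, y_i ∈ S (1 ≤ i ≤ n) with Σ_{i=1}^n x_i·β_g(y_i)·1_S = (1_S if g = 1, 0 otherwise) for all g ∈ G. Then S^{α_H} is a partial α̃-Galois extension of S^{α_G} for the induced partial action of G/H: there exist N and elements u_i, v_i ∈ S^{α_H} (1 ≤ i ≤ N) such that Σ_{i=1}^N u_i·α̃_{gH}(v_i·1̃_{g⁻¹H}) = (1_S if g ∈ H, 0 otherwise) for all g ∈ G. (Galois part of Theorem 3.1.) -/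
/-!
The partial trace `tr_H(s) = ∑_{h ∈ H} α_h(s·1_{h⁻¹})` is onto `S^{α_H}`: the Galois coordinates
show that `S` is generated by the `x_i·1_S` over the ring of `H`-invariants of `T` and that
`S = tr_H(S)·S`, so Nakayama's lemma produces `c ∈ S` with `tr_H(c) = 1_S`. The Galois coordinates
of `S^{α_H}` are then `u_i = tr_H(x_i c)` and `v_i = tr_H(y_i)`: after expanding `α̃_{gH}`, the
identity `∑_i β_w(x_i)·β_u(y_i)·β_w(1_S) = δ_{w,u}·β_w(1_S)` collapses every double sum over `H`
to the terms indexed by `gH ∩ H`, which is `H` or empty.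
-/

open Finset

namespace PartialGalois

open scoped Classical

variable {T G : Type*} [CommRing T] [Group G] (β : G →* RingAut T)

lemma map_mul_apply (p q : G) (t : T) : β (p * q) t = β p (β q t) := by
  rw [map_mul, RingAut.mul_apply]

lemma map_mul_apply_mul_map {e ε : T} {a : G} (hε : ε * β a e = ε) (g : G) :
    β (g * a) e * β g ε = β g ε := by
  rw [map_mul_apply, ← map_mul, mul_comm, hε]

lemma map_idem {e : T} (he : e * e = e) (g : G) : β g e * β g e = β g e := by
  rw [← map_mul, he]

/-- `α̃_{gH}(x) = β_g(ψ_H(x))·1_S`, where `ψ_H(x) = ∑ₖ β_{a k}(x)·ε k`. -/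
def inducedAction {κ : Type*} (e : T) (t : Finset κ) (a : κ → G) (ε : κ → T) (g : G) (x : T) :
    T :=
  β g (∑ k ∈ t, β (a k) x * ε k) * e

lemma inducedAction_mul_map {κ : Type*} {e E : T} {t : Finset κ} {a : κ → G} {ε : κ → T}
    (hEe : E * e = e) (hε : ∀ k ∈ t, ε k * β (a k) e = ε k) {g : G}
    (hE : ∀ k ∈ t, β (g * a k * g⁻¹) E = E) (v : T) :
    inducedAction β e t a ε g (v * (β g⁻¹ E * e)) = ∑ k ∈ t, β (g * a k) v * β g (ε k) * e := by
  rw [inducedAction, map_sum, sum_mul]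
  refine sum_congr rfl fun k hk => ?_
  have hconj : β (g * a k) (β g⁻¹ E) = E := by rw [← map_mul_apply, hE k hk]
  calc β g (β (a k) (v * (β g⁻¹ E * e)) * ε k) * e
      = β (g * a k) v * β (g * a k) (β g⁻¹ E) * (β (g * a k) e * β g (ε k)) * e := by
        simp only [map_mul, RingAut.mul_apply]
        ring
    _ = β (g * a k) v * β g (ε k) * e := by
        rw [hconj, map_mul_apply_mul_map β (hε k hk)]
        linear_combination β (g * a k) v * β g (ε k) * hEe

def IsGaloisCoordinates {ι : Type*} (e : T) (s : Finset ι) (x y : ι → T) : Prop :=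
  ∀ g : G, ∑ i ∈ s, x i * β g (y i) * e = if g = 1 then e else 0

section Subgroup

variable (H : Subgroup G)

def fixingSubring : Subring T where
  carrier := {r | ∀ h ∈ H, β h r = r}
  mul_mem' ha hb h hh := by rw [map_mul, ha h hh, hb h hh]
  one_mem' h _ := map_one (β h)
  add_mem' ha hb h hh := by rw [map_add, ha h hh, hb h hh]
  zero_mem' h _ := map_zero (β h)
  neg_mem' ha h hh := by rw [map_neg, ha h hh]

def partialInvariants (e : T) : Set T :=
  {s | s * e = s ∧ ∀ g ∈ H, β g s * e = s * (β g e * e)}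

lemma mul_mem_partialInvariants {e : T} (he : e * e = e) {r : T} (hr : r ∈ fixingSubring β H) :
    r * e ∈ partialInvariants β H e := by
  refine ⟨by rw [mul_assoc, he], fun g hg => ?_⟩
  rw [map_mul, hr g hg]
  linear_combination -(r * β g e) * he

lemma sum_ite_mul_map_mul {κ : Type*} {e : T} (t : Finset κ) (a : κ → G)
    (ε : κ → T) (ha : ∀ k ∈ t, a k ∈ H) (hε : ∀ k ∈ t, ε k * β (a k) e = ε k) (g : G) :
    ∑ k ∈ t, (if g * a k ∈ H then e * β (g * a k) e else 0) * β g (ε k) * e =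
      if g ∈ H then e * β g (∑ k ∈ t, ε k) * e else 0 := by
  split_ifs with hg
  · rw [map_sum, mul_sum, sum_mul]
    refine sum_congr rfl fun k hk => ?_
    rw [if_pos (H.mul_mem hg (ha k hk)), mul_assoc e, map_mul_apply_mul_map β (hε k hk)]
  · refine sum_eq_zero fun k hk => ?_
    rw [if_neg fun hga => hg (by simpa using H.mul_mem hga (H.inv_mem (ha k hk))), zero_mul,
      zero_mul]

variable [Fintype H]

lemma sum_map_mem_fixingSubring (t : T) : ∑ h : H, β h t ∈ fixingSubring β H := by
  intro g hg
  simp only [map_sum, ← map_mul_apply]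
  exact Fintype.sum_equiv (Equiv.mulLeft ⟨g, hg⟩) _ _ fun _ => rfl

lemma sum_ite_coe_eq {M : Type*} [AddCommMonoid M] (u : G) (f : G → M) :
    ∑ h : H, (if (h : G) = u then f h else 0) = if u ∈ H then f u else 0 := by
  split_ifs with hu
  · rw [Fintype.sum_eq_single ⟨u, hu⟩ fun h hne => if_neg fun h' => hne (Subtype.ext h')]
    simp
  · exact sum_eq_zero fun h _ => if_neg fun h' : (h : G) = u => hu (h' ▸ h.2)

variable (e : T)

/-- For `s ∈ S` this is `∑_{h ∈ H} α_h(s·1_{h⁻¹})`. -/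
def partialTrace (s : T) : T := (∑ h : H, β h (s * e)) * e

/-- `e_H = ψ_H(1_S)`, the unit of the ideal `∑_{h ∈ H} β_h(S)`. -/
def orbitUnit : T := 1 - ∏ h : H, (1 - β h e)

def traceIdeal : Ideal (fixingSubring β H) where
  carrier := {r | ∃ t, (r : T) = ∑ h : H, β h (t * e)}
  add_mem' := by
    rintro _ _ ⟨t, ht⟩ ⟨t', ht'⟩
    exact ⟨t + t', by simp only [Subring.coe_add, ht, ht', add_mul, map_add, sum_add_distrib]⟩
  zero_mem' := ⟨0, by simp⟩
  smul_mem' := by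
    rintro c _ ⟨t, ht⟩
    refine ⟨c * t, ?_⟩
    rw [smul_eq_mul, Subring.coe_mul, ht, mul_sum]
    exact sum_congr rfl fun h _ => by rw [mul_assoc, map_mul (β h) (c : T), c.2 h h.2]

variable {e}

lemma partialTrace_mem_partialInvariants (he : e * e = e) (s : T) :
    partialTrace β H e s ∈ partialInvariants β H e :=
  mul_mem_partialInvariants β H he (sum_map_mem_fixingSubring β H _)

lemma orbitUnit_mul (he : e * e = e) : orbitUnit β H e * e = e := by
  have h1 : (1 - β ((1 : H) : G) e) * e = 0 := by
    rw [OneMemClass.coe_one, map_one, RingAut.one_apply, sub_mul, one_mul, he, sub_self]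
  rw [orbitUnit, sub_mul, one_mul, ← mul_prod_erase univ _ (mem_univ 1), mul_right_comm, h1,
    zero_mul, sub_zero]

lemma map_orbitUnit {g : G} (hg : g ∈ H) : β g (orbitUnit β H e) = orbitUnit β H e := by
  simp only [orbitUnit, map_sub, map_one, map_prod, ← map_mul_apply]
  congr 1
  exact Fintype.prod_equiv (Equiv.mulLeft ⟨g, hg⟩) _ _ fun _ => rfl

lemma map_partialTrace (w : G) (t : T) :
    β w (partialTrace β H e t) = ∑ h : H, β (w * h) t * β (w * h) e * β w e := by
  simp [partialTrace, sum_mul]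

namespace IsGaloisCoordinates

variable {β} {ι : Type*} {s : Finset ι} {x y : ι → T} (hG : IsGaloisCoordinates β e s x y)
include hG

lemma sum_map_mul_map (w u : G) :
    ∑ i ∈ s, β w (x i) * β u (y i) * β w e = if w = u then β w e else 0 := by
  have := congrArg (β w) (hG (w⁻¹ * u))
  simp only [map_sum, map_mul, RingAut.mul_apply, map_inv, RingAut.inv_apply,
    RingEquiv.apply_symm_apply, inv_mul_eq_one] at this
  rw [this, apply_ite (β w), map_zero]

lemma sum_sum_map_mul (t : T) : ∑ i ∈ s, (∑ h : H, β h (y i * t)) * (x i * e) = t * e := by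
  calc ∑ i ∈ s, (∑ h : H, β h (y i * t)) * (x i * e)
      = ∑ h : H, (∑ i ∈ s, x i * β h (y i) * e) * β h t := by
        simp only [sum_mul]
        rw [sum_comm]
        exact sum_congr rfl fun h _ => sum_congr rfl fun i _ => by rw [map_mul]; ring
    _ = ∑ h : H, if (h : G) = 1 then e * β h t else 0 := by
        simp only [hG _, ite_mul, zero_mul]
    _ = t * e := by
        rw [sum_ite_coe_eq H 1 fun g => e * β g t, if_pos H.one_mem, map_one, RingAut.one_apply,
          mul_comm]

variable (he : e * e = e)
include he

lemma sum_partialTrace_mul_map (c : T) (w : G) :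
    ∑ i ∈ s, partialTrace β H e (x i * c) * β w (y i) * β w e =
      if w ∈ H then β w (c * e) * e else 0 := by
  have hce : ∀ g : G, β g (c * e) * β g e = β g (c * e) := fun g => by
    rw [← map_mul, mul_assoc, he]
  calc ∑ i ∈ s, partialTrace β H e (x i * c) * β w (y i) * β w e
      = ∑ h : H, (∑ i ∈ s, β h (x i) * β w (y i) * β h e) * (β h (c * e) * e * β w e) := by
        simp only [partialTrace, sum_mul]
        rw [sum_comm]
        refine sum_congr rfl fun h _ => sum_congr rfl fun i _ => ?_
        rw [mul_assoc (x i), map_mul]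
        linear_combination -(β h (x i) * e * β w (y i) * β w e) * hce h
    _ = ∑ h : H, if (h : G) = w then β h e * (β h (c * e) * e * β w e) else 0 := by
        simp only [hG.sum_map_mul_map, ite_mul, zero_mul]
    _ = if w ∈ H then β w (c * e) * e else 0 := by
        rw [sum_ite_coe_eq H w fun g => β g e * (β g (c * e) * e * β w e)]
        congr 1
        linear_combination (β w (c * e) * e) * map_idem β he w + e * hce w

lemma sum_partialTrace_mul_map_partialTrace (c : T) (w : G) :
    ∑ i ∈ s, partialTrace β H e (x i * c) * β w (partialTrace β H e (y i)) =
      if w ∈ H then partialTrace β H e c * β w e else 0 := by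
  calc ∑ i ∈ s, partialTrace β H e (x i * c) * β w (partialTrace β H e (y i))
      = ∑ h : H, (∑ i ∈ s, partialTrace β H e (x i * c) * β (w * h) (y i) * β (w * h) e)
          * β w e := by
        simp only [map_partialTrace, mul_sum, sum_mul]
        rw [sum_comm]
        exact sum_congr rfl fun h _ => sum_congr rfl fun i _ => by ring
    _ = ∑ h : H, (if w * h ∈ H then β (w * h) (c * e) * e else 0) * β w e := by
        simp only [hG.sum_partialTrace_mul_map H he]
    _ = if w ∈ H then partialTrace β H e c * β w e else 0 := by
        split_ifs with hw
        · simp only [H.mul_mem_cancel_left hw, SetLike.coe_mem, if_true, partialTrace, sum_mul]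
          exact Fintype.sum_equiv (Equiv.mulLeft ⟨w, hw⟩) _ _ fun _ => rfl
        · refine sum_eq_zero fun h _ => ?_
          rw [if_neg fun hwh => hw (by simpa using H.mul_mem hwh (H.inv_mem h.2)), zero_mul]

lemma exists_partialTrace_eq : ∃ c, partialTrace β H e c = e := by
  set N : Submodule (fixingSubring β H) T := Submodule.span _ ((fun i => x i * e) '' s)
  have hmem : ∀ t, t * e ∈ traceIdeal β H e • N := by
    intro t
    have h := hG.sum_sum_map_mul H (t * e)
    rw [mul_assoc, he] at h
    rw [← h]
    refine Submodule.sum_mem _ fun i hi => ?_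
    have hcoef : (⟨_, sum_map_mem_fixingSubring β H (y i * (t * e))⟩ : fixingSubring β H) ∈
        traceIdeal β H e := ⟨y i * t, by simp only [mul_assoc]⟩
    exact Submodule.smul_mem_smul hcoef (Submodule.subset_span ⟨i, hi, rfl⟩)
  obtain ⟨r, ⟨t, ht⟩, hr⟩ := Submodule.exists_sub_one_mem_and_smul_eq_zero_of_fg_of_le_smul
    (traceIdeal β H e) N (Submodule.fg_span (s.finite_toSet.image _))
    (Submodule.span_le.2 <| by rintro _ ⟨i, _, rfl⟩; exact hmem (x i))
  have hre : (r : T) * e = 0 := hr e (Submodule.smul_le_right (by simpa using hmem 1))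
  refine ⟨-t, ?_⟩
  push_cast at ht
  simp only [partialTrace, neg_mul, map_neg, sum_neg_distrib, ← ht]
  linear_combination -hre

lemma sum_partialTrace_mul_inducedAction [H.Normal] {κ : Type*} {t : Finset κ} {a : κ → G}
    {ε : κ → T} (ha : ∀ k ∈ t, a k ∈ H) (hε : ∀ k ∈ t, ε k * β (a k) e = ε k)
    (hεsum : ∑ k ∈ t, ε k = orbitUnit β H e) {c : T} (hc : partialTrace β H e c = e) (g : G) :
    ∑ i ∈ s, partialTrace β H e (x i * c) *
        inducedAction β e t a ε g (partialTrace β H e (y i) * (β g⁻¹ (orbitUnit β H e) * e)) =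
      if g ∈ H then e else 0 := by
  have hEe := orbitUnit_mul β H he
  have hconj : ∀ k ∈ t, β (g * a k * g⁻¹) (orbitUnit β H e) = orbitUnit β H e := fun k hk =>
    map_orbitUnit β H (Subgroup.Normal.conj_mem ‹_› _ (ha k hk) g)
  calc ∑ i ∈ s, partialTrace β H e (x i * c) *
        inducedAction β e t a ε g (partialTrace β H e (y i) * (β g⁻¹ (orbitUnit β H e) * e))
      = ∑ i ∈ s, partialTrace β H e (x i * c) *
          ∑ k ∈ t, β (g * a k) (partialTrace β H e (y i)) * β g (ε k) * e := by
        simp only [inducedAction_mul_map β hEe hε hconj]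
    _ = ∑ k ∈ t, (∑ i ∈ s, partialTrace β H e (x i * c) *
          β (g * a k) (partialTrace β H e (y i))) * β g (ε k) * e := by
        simp only [mul_sum, sum_mul]
        rw [sum_comm]
        exact sum_congr rfl fun _ _ => sum_congr rfl fun _ _ => by ring
    _ = ∑ k ∈ t, (if g * a k ∈ H then e * β (g * a k) e else 0) * β g (ε k) * e := by
        simp only [hG.sum_partialTrace_mul_map_partialTrace H he, hc]
    _ = if g ∈ H then e else 0 := by
        rw [sum_ite_mul_map_mul β H t a ε ha hε, hεsum]
        split_ifs with hg
        · rw [map_orbitUnit β H hg, mul_assoc, hEe, he]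
        · rfl

end IsGaloisCoordinates

end Subgroup

lemma exists_subgroup_mem_iff_of_mul_mem [Finite G] {h : ℕ → G} {m : ℕ} (hm : 0 < m)
    (h1 : h 0 = 1) (hmul : ∀ i < m, ∀ j < m, ∃ k < m, h i * h j = h k) :
    ∃ K : Subgroup G, ∀ g, g ∈ K ↔ ∃ j < m, g = h j := by
  let M : Submonoid G :=
    { carrier := {g | ∃ j < m, g = h j}
      mul_mem' := by
        rintro _ _ ⟨i, hi, rfl⟩ ⟨j, hj, rfl⟩
        exact hmul i hi j hj
      one_mem' := ⟨0, hm, h1.symm⟩ }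
  refine ⟨{ M with inv_mem' := fun {g} hg => ?_ }, fun _ => Iff.rfl⟩
  have hinv : g⁻¹ = g ^ (Nat.card G - 1) := (eq_inv_of_mul_eq_one_left <| by
    rw [pow_sub_one_mul Nat.card_pos.ne', pow_card_eq_one']).symm
  rw [hinv]
  exact M.pow_mem hg _

lemma prod_range_eq_prod_subgroup {M : Type*} [CommMonoid M] {K : Subgroup G} [Fintype K]
    {h : ℕ → G} {m : ℕ} (hK : ∀ g, g ∈ K ↔ ∃ j < m, g = h j)
    (hinj : ∀ i < m, ∀ j < m, h i = h j → i = j) (f : G → M) :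
    ∏ j ∈ range m, f (h j) = ∏ k : K, f k := by
  rw [← prod_image (f := f) fun i hi j hj => hinj i (mem_range.1 hi) j (mem_range.1 hj)]
  exact prod_subtype _ (fun g => by simp [hK, eq_comm]) f

lemma sum_range_prod_one_sub_mul {R : Type*} [CommRing R] (a : ℕ → R) (n : ℕ) :
    ∑ i ∈ range n, (∏ j ∈ range i, (1 - a j)) * a i = 1 - ∏ j ∈ range n, (1 - a j) := by
  induction n with
  | zero => simp
  | succ n ih =>
    rw [sum_range_succ, prod_range_succ, ih]
    ring

end PartialGalois

open Finset PartialGalois in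
theorem stmt_10_general {T : Type*} [CommRing T] {G : Type*} [Group G] [Fintype G]
    (β : G →* RingAut T) (oneS : T) (hidem : oneS * oneS = oneS)
    (m : ℕ) (hm : 0 < m) (h : ℕ → G) (h1 : h 0 = 1)
    (hinj : ∀ i < m, ∀ j < m, h i = h j → i = j)
    (hmulc : ∀ i < m, ∀ j < m, ∃ k < m, h i * h j = h k)
    (hnormal : ∀ g : G, ∀ i < m, ∃ j < m, g * h i * g⁻¹ = h j)
    (e : ℕ → T)
    (he : ∀ i, e i = (∏ j ∈ Finset.range i, (1 - β (h j) oneS)) * β (h i) oneS)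
    (ψ : T → T) (hψ : ∀ t, ψ t = ∑ i ∈ Finset.range m, β (h i) t * e i)
    (eH : T) (heH : eH = ψ oneS)
    (SaH : T → Prop)
    (hSaH : ∀ s : T, SaH s ↔
      (s * oneS = s ∧ ∀ i < m, β (h i) s * oneS = s * (β (h i) oneS * oneS)))
    (oneTil : G → T) (honeTil : ∀ g : G, oneTil g = β g eH * oneS)
    (αTil : G → T → T) (hαTil : ∀ (g : G) (x : T), αTil g x = β g (ψ x) * oneS)
    (n : ℕ) (x y : ℕ → T)
    (hGal : ∀ g : G,
      (g = 1 → ∑ i ∈ Finset.range n, x i * β g (y i) * oneS = oneS) ∧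
      (g ≠ 1 → ∑ i ∈ Finset.range n, x i * β g (y i) * oneS = 0)) :
    ∃ N : ℕ, ∃ u v : ℕ → T,
      (∀ i < N, SaH (u i) ∧ SaH (v i)) ∧
      ∀ g : G,
        ((∃ j < m, g = h j) →
          ∑ i ∈ Finset.range N, u i * αTil g (v i * oneTil g⁻¹) = oneS) ∧
        ((¬ ∃ j < m, g = h j) →
          ∑ i ∈ Finset.range N, u i * αTil g (v i * oneTil g⁻¹) = 0) := by
  classical
  obtain ⟨K, hK⟩ := exists_subgroup_mem_iff_of_mul_mem hm h1 hmulc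
  have hhK : ∀ k < m, h k ∈ K := fun k hk => (hK _).2 ⟨k, hk, rfl⟩
  have hε : ∀ k, e k * β (h k) oneS = e k := fun k => by rw [he, mul_assoc, map_idem β hidem]
  have hεsum : ∑ k ∈ range m, e k = eH := by
    rw [heH, hψ]
    exact sum_congr rfl fun k _ => by rw [mul_comm, hε]
  have heHK : eH = orbitUnit β K oneS := by
    rw [← hεsum, orbitUnit, ← prod_range_eq_prod_subgroup hK hinj fun g => 1 - β g oneS,
      ← sum_range_prod_one_sub_mul]
    exact sum_congr rfl fun k _ => he k
  have hSaH' : ∀ s ∈ partialInvariants β K oneS, SaH s := fun s hs =>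
    (hSaH s).2 ⟨hs.1, fun i hi => hs.2 _ (hhK i hi)⟩
  have hG : IsGaloisCoordinates β oneS (range n) x y := fun g => by
    split_ifs with hg
    exacts [(hGal g).1 hg, (hGal g).2 hg]
  have hKn : K.Normal := ⟨fun k hk g => by
    obtain ⟨i, hi, rfl⟩ := (hK k).1 hk
    obtain ⟨j, hj, hj'⟩ := hnormal g i hi
    exact hj' ▸ hhK j hj⟩
  have hαK : ∀ g x, αTil g x = inducedAction β oneS (range m) h e g x := fun g x => by
    rw [hαTil, hψ, inducedAction]
  obtain ⟨c, hc⟩ := hG.exists_partialTrace_eq K hidem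
  refine ⟨n, fun i => partialTrace β K oneS (x i * c), fun i => partialTrace β K oneS (y i),
    fun i _ => ⟨hSaH' _ (partialTrace_mem_partialInvariants β K hidem _),
      hSaH' _ (partialTrace_mem_partialInvariants β K hidem _)⟩, fun g => ?_⟩
  simp only [hαK, honeTil, heHK, hG.sum_partialTrace_mul_inducedAction K hidem
    (fun k hk => hhK k (mem_range.1 hk)) (fun k _ => hε k) (hεsum.trans heHK) hc g]
  exact ⟨fun hg => if_pos ((hK g).2 hg), fun hg => if_neg fun hgK => hg ((hK g).1 hgK)⟩

/-- Galois part of Theorem 3.1: if S is a partial α-Galois extension of S^{α_G}, then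
S^{α_H} is a partial Galois extension of S^{α_G} for the induced partial action of G/H. -/
theorem stmt_10 {T : Type*} [CommRing T] {G : Type*} [Group G] [Fintype G]
    (β : G →* RingAut T) (oneS : T) (hidem : oneS * oneS = oneS)
    (hglob : ∏ g : G, (1 - β g oneS) = 0)
    (m : ℕ) (hm : 0 < m) (h : ℕ → G) (h1 : h 0 = 1)
    (hinj : ∀ i < m, ∀ j < m, h i = h j → i = j)
    (hmulc : ∀ i < m, ∀ j < m, ∃ k < m, h i * h j = h k)
    (hnormal : ∀ g : G, ∀ i < m, ∃ j < m, g * h i * g⁻¹ = h j)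
    (e : ℕ → T)
    (he : ∀ i, e i = (∏ j ∈ Finset.range i, (1 - β (h j) oneS)) * β (h i) oneS)
    (ψ : T → T) (hψ : ∀ t, ψ t = ∑ i ∈ Finset.range m, β (h i) t * e i)
    (eH : T) (heH : eH = ψ oneS)
    (SaH : T → Prop)
    (hSaH : ∀ s : T, SaH s ↔
      (s * oneS = s ∧ ∀ i < m, β (h i) s * oneS = s * (β (h i) oneS * oneS)))
    (oneTil : G → T) (honeTil : ∀ g : G, oneTil g = β g eH * oneS)
    (Dtil : G → Set T) (hDtil : ∀ g : G, Dtil g = {x : T | ∃ s : T, SaH s ∧ x = s * oneTil g})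
    (αTil : G → T → T) (hαTil : ∀ (g : G) (x : T), αTil g x = β g (ψ x) * oneS)
    (n : ℕ) (x y : ℕ → T)
    (hxS : ∀ i < n, x i * oneS = x i) (hyS : ∀ i < n, y i * oneS = y i)
    (hGal : ∀ g : G,
      (g = 1 → ∑ i ∈ Finset.range n, x i * β g (y i) * oneS = oneS) ∧
      (g ≠ 1 → ∑ i ∈ Finset.range n, x i * β g (y i) * oneS = 0)) :
    ∃ N : ℕ, ∃ u v : ℕ → T,
      (∀ i < N, SaH (u i) ∧ SaH (v i)) ∧
      ∀ g : G,
        ((∃ j < m, g = h j) →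
          ∑ i ∈ Finset.range N, u i * αTil g (v i * oneTil g⁻¹) = oneS) ∧
        ((¬ ∃ j < m, g = h j) →
          ∑ i ∈ Finset.range N, u i * αTil g (v i * oneTil g⁻¹) = 0) :=
  stmt_10_general β oneS hidem m hm h h1 hinj hmulc hnormal e he ψ hψ eH heH SaH hSaH oneTil honeTil
    αTil hαTil n x y hGal
end
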